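/- arXiv:quant-ph/0612013 — 2 statements merged into one kernel-verified Lean document; each statement's English description precedes it below -/
import Mathlib

section
/- Let ψ₁ = α₁·(e₀⊗e₀) + α₂·(e₁⊗e₁), ψ₂ = β₁·(e₀⊗e₀) + β₂·(e₁⊗e₁) with {ψ₁, ψ₂} linearly independent and all coefficients nonzero, and ψ₃ = e₀ ⊗ e₁. Then there exists a product vector φ = a ⊗ b with ⟨ψ₁, φ⟩ = 0, ⟨ψ₂, φ⟩ = 0, and ⟨ψ₃, φ⟩ ≠ 0. -/
/-! ψ₃ = e₀ ⊗ e₁ is itself a product vector, and since the inner product of elementary tensors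
factorises, it is orthogonal to e₀ ⊗ e₀ and e₁ ⊗ e₁, hence to ψ₁ and ψ₂; so φ = ψ₃ works. -/

/-- The elementary tensor `a ⊗ b` of two Euclidean-space vectors, realised in
`EuclideanSpace ℂ (ι × κ)` (which carries the induced tensor inner product). -/
noncomputable def tens {ι κ : Type*} [Fintype ι] [Fintype κ]
    (a : EuclideanSpace ℂ ι) (b : EuclideanSpace ℂ κ) :
    EuclideanSpace ℂ (ι × κ) :=
  WithLp.toLp 2 (fun p : ι × κ => a p.1 * b p.2)

/-- The standard basis vector `eᵢ` of `ℂ²`. -/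
noncomputable def e (i : Fin 2) : EuclideanSpace ℂ (Fin 2) := EuclideanSpace.single i 1

theorem inner_tens_tens {ι κ : Type*} [Fintype ι] [Fintype κ]
    (a c : EuclideanSpace ℂ ι) (b d : EuclideanSpace ℂ κ) :
    inner ℂ (tens a b) (tens c d) = inner ℂ a c * inner ℂ b d := by
  simp only [tens, PiLp.inner_apply, Fintype.sum_prod_type, Finset.sum_mul_sum,
    RCLike.inner_apply, map_mul]
  refine Finset.sum_congr rfl fun i _ => Finset.sum_congr rfl fun j _ => ?_
  ring

theorem inner_e_e (i j : Fin 2) : inner ℂ (e i) (e j) = if i = j then 1 else 0 := by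
  simp [e, EuclideanSpace.inner_single_left]

theorem stmt_11_general (α₁ α₂ β₁ β₂ : ℂ)
    (ψ₁ ψ₂ ψ₃ : EuclideanSpace ℂ (Fin 2 × Fin 2))
    (hψ₁ : ψ₁ = α₁ • tens (e 0) (e 0) + α₂ • tens (e 1) (e 1))
    (hψ₂ : ψ₂ = β₁ • tens (e 0) (e 0) + β₂ • tens (e 1) (e 1))
    (hψ₃ : ψ₃ = tens (e 0) (e 1)) :
    ∃ (a b : EuclideanSpace ℂ (Fin 2)),
      (inner ℂ ψ₁ (tens a b) : ℂ) = 0 ∧ (inner ℂ ψ₂ (tens a b) : ℂ) = 0 ∧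
      (inner ℂ ψ₃ (tens a b) : ℂ) ≠ 0 := by
  subst hψ₁ hψ₂ hψ₃
  refine ⟨e 0, e 1, ?_, ?_, ?_⟩ <;>
    simp only [inner_add_left, inner_smul_left, inner_tens_tens, inner_e_e] <;> simp

theorem stmt_11 (α₁ α₂ β₁ β₂ : ℂ) (hα₁ : α₁ ≠ 0) (hα₂ : α₂ ≠ 0)
    (hβ₁ : β₁ ≠ 0) (hβ₂ : β₂ ≠ 0)
    (ψ₁ ψ₂ ψ₃ : EuclideanSpace ℂ (Fin 2 × Fin 2))
    (hψ₁ : ψ₁ = α₁ • tens (e 0) (e 0) + α₂ • tens (e 1) (e 1))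
    (hψ₂ : ψ₂ = β₁ • tens (e 0) (e 0) + β₂ • tens (e 1) (e 1))
    (hψ₃ : ψ₃ = tens (e 0) (e 1))
    (hli : LinearIndependent ℂ ![ψ₁, ψ₂]) :
    ∃ (a b : EuclideanSpace ℂ (Fin 2)),
      (inner ℂ ψ₁ (tens a b) : ℂ) = 0 ∧ (inner ℂ ψ₂ (tens a b) : ℂ) = 0 ∧
      (inner ℂ ψ₃ (tens a b) : ℂ) ≠ 0 :=
  stmt_11_general α₁ α₂ β₁ β₂ ψ₁ ψ₂ ψ₃ hψ₁ hψ₂ hψ₃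
end

section
/- Let a, b, c, d be nonzero complex numbers and set ψ₁ = a·(e₀⊗e₀) + b·(e₁⊗e₁), ψ₂ = c·(e₀⊗e₁) + d·(e₁⊗e₀) in ℂ² ⊗ ℂ². Let s be a complex square root of (ab)/(cd). Then ψ₁ + s·ψ₂ is a product vector, and ψ₁ − s·ψ₂ is a product vector. -/
/-! A vector of `ℂ² ⊗ ℂ²` is a product vector as soon as its coefficient matrix has vanishing
determinant: the matrix then has rank at most one, so it factors through any nonzero entry.
For `ψ₁ ± s • ψ₂` this determinant is `a * b - s ^ 2 * (c * d) = 0`. -/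

lemma tens_apply {ι κ : Type*} [Fintype ι] [Fintype κ]
    (u : EuclideanSpace ℂ ι) (v : EuclideanSpace ℂ κ) (p : ι × κ) :
    tens u v p = u p.1 * v p.2 := rfl

lemma exists_tens_eq_of_forall_mul_eq_mul {ι κ : Type*} [Fintype ι] [Fintype κ]
    (ψ : EuclideanSpace ℂ (ι × κ))
    (h : ∀ i i' j j', ψ (i, j) * ψ (i', j') = ψ (i, j') * ψ (i', j)) :
    ∃ u v, ψ = tens u v := by
  by_cases hψ : ∃ p, ψ p ≠ 0
  · obtain ⟨⟨i₀, j₀⟩, hp⟩ := hψ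
    refine ⟨WithLp.toLp 2 fun i => ψ (i, j₀) / ψ (i₀, j₀), WithLp.toLp 2 fun j => ψ (i₀, j), ?_⟩
    ext ⟨i, j⟩
    rw [tens_apply, div_mul_eq_mul_div, eq_div_iff hp]
    exact h i i₀ j j₀
  · simp only [not_exists, not_not] at hψ
    exact ⟨0, 0, by ext p; simp [hψ p, tens_apply]⟩

lemma exists_tens_eq_of_det_eq_zero (ψ : EuclideanSpace ℂ (Fin 2 × Fin 2))
    (h : ψ (0, 0) * ψ (1, 1) = ψ (0, 1) * ψ (1, 0)) :
    ∃ u v, ψ = tens u v := by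
  refine exists_tens_eq_of_forall_mul_eq_mul ψ fun i i' j j' => ?_
  fin_cases i <;> fin_cases i' <;> fin_cases j <;> fin_cases j' <;>
    simp only [Fin.zero_eta, Fin.mk_one] <;>
    first | ring1 | linear_combination h | linear_combination -h

lemma exists_tens_eq_add_smul (a b c d t : ℂ) (h : a * b = t ^ 2 * (c * d)) :
    ∃ u v, a • tens (e 0) (e 0) + b • tens (e 1) (e 1)
      + t • (c • tens (e 0) (e 1) + d • tens (e 1) (e 0)) = tens u v := by
  refine exists_tens_eq_of_det_eq_zero _ ?_
  simp only [e, smul_add, PiLp.add_apply, PiLp.smul_apply, tens_apply, smul_eq_mul,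
    PiLp.single_eq_same, ne_eq, zero_ne_one, one_ne_zero, not_false_eq_true,
    PiLp.single_eq_of_ne, mul_one, mul_zero, add_zero, zero_add]
  linear_combination h

theorem stmt_13_general (a b c d : ℂ) (hc : c ≠ 0) (hd : d ≠ 0)
    (ψ₁ ψ₂ : EuclideanSpace ℂ (Fin 2 × Fin 2))
    (hψ₁ : ψ₁ = a • tens (e 0) (e 0) + b • tens (e 1) (e 1))
    (hψ₂ : ψ₂ = c • tens (e 0) (e 1) + d • tens (e 1) (e 0))
    (s : ℂ) (hs : s ^ 2 = a * b / (c * d)) :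
    (∃ u v : EuclideanSpace ℂ (Fin 2), ψ₁ + s • ψ₂ = tens u v) ∧
    (∃ u v : EuclideanSpace ℂ (Fin 2), ψ₁ - s • ψ₂ = tens u v) := by
  have hdet : a * b = s ^ 2 * (c * d) := by
    rw [hs, div_mul_cancel₀ _ (mul_ne_zero hc hd)]
  subst hψ₁ hψ₂
  refine ⟨exists_tens_eq_add_smul a b c d s hdet, ?_⟩
  rw [sub_eq_add_neg, ← neg_smul]
  exact exists_tens_eq_add_smul a b c d (-s) (by rwa [neg_sq])

theorem stmt_13 (a b c d : ℂ) (ha : a ≠ 0) (hb : b ≠ 0) (hc : c ≠ 0) (hd : d ≠ 0)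
    (ψ₁ ψ₂ : EuclideanSpace ℂ (Fin 2 × Fin 2))
    (hψ₁ : ψ₁ = a • tens (e 0) (e 0) + b • tens (e 1) (e 1))
    (hψ₂ : ψ₂ = c • tens (e 0) (e 1) + d • tens (e 1) (e 0))
    (s : ℂ) (hs : s ^ 2 = a * b / (c * d)) :
    (∃ u v : EuclideanSpace ℂ (Fin 2), ψ₁ + s • ψ₂ = tens u v) ∧
    (∃ u v : EuclideanSpace ℂ (Fin 2), ψ₁ - s • ψ₂ = tens u v) :=
  stmt_13_general a b c d hc hd ψ₁ ψ₂ hψ₁ hψ₂ s hs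
end
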